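/- Let P ∈ ℝ^{m×n} be an entrywise nonnegative matrix with no zero columns and nonnegative rank rank₊(P) = r. Then there exists ε > 0 such that every entrywise nonnegative matrix N ∈ ℝ^{m×n} with ‖N − P‖ < ε satisfies rank₊(N) ≥ r. (The nonnegative rank is lower semicontinuous at matrices without zero columns: it can only increase in a neighborhood.) -/

import Mathlib

attribute [local instance] Matrix.frobeniusNormedAddCommGroup

/-- The nonnegative rank of a matrix: the smallest `r` such that `M = U * V`
with `U : m × r` and `V : r × n` entrywise nonnegative. -/
noncomputable def nnRank {m n : ℕ} (M : Matrix (Fin m) (Fin n) ℝ) : ℕ :=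
  sInf {r : ℕ | ∃ (U : Matrix (Fin m) (Fin r) ℝ) (V : Matrix (Fin r) (Fin n) ℝ),
    (∀ i k, 0 ≤ U i k) ∧ (∀ k j, 0 ≤ V k j) ∧ M = U * V}

/-!
For every `t` the nonnegative matrices of nonnegative rank at most `t` form a closed set.
Closedness is local: near a given matrix the entries are bounded by some `C`, and rescaling the
`k`-th column of `U` by `1 / ∑ i, U i k` and the `k`-th row of `V` by `∑ i, U i k` turns any
nonnegative factorization `U * V` of such a matrix into one with the entries of `U` in `[0, 1]`
and those of `V` in `[0, m C]`. Such bounded factorizations form a compact set, so their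
products form a closed one.
-/

open Set

def HasNonnegFactorization {m n : ℕ} (M : Matrix (Fin m) (Fin n) ℝ) (r : ℕ) : Prop :=
  ∃ (U : Matrix (Fin m) (Fin r) ℝ) (V : Matrix (Fin r) (Fin n) ℝ),
    (∀ i k, 0 ≤ U i k) ∧ (∀ k j, 0 ≤ V k j) ∧ M = U * V

theorem HasNonnegFactorization.nonneg {m n r : ℕ} {M : Matrix (Fin m) (Fin n) ℝ}
    (h : HasNonnegFactorization M r) (i : Fin m) (j : Fin n) : 0 ≤ M i j := by
  obtain ⟨U, V, hU, hV, rfl⟩ := h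
  rw [Matrix.mul_apply]
  exact Finset.sum_nonneg fun k _ => mul_nonneg (hU i k) (hV k j)

theorem nnRank_le_of_hasNonnegFactorization {m n r : ℕ} {M : Matrix (Fin m) (Fin n) ℝ}
    (h : HasNonnegFactorization M r) : nnRank M ≤ r :=
  Nat.sInf_le h

theorem hasNonnegFactorization_nnRank {m n : ℕ} {M : Matrix (Fin m) (Fin n) ℝ}
    (hM : ∀ i j, 0 ≤ M i j) : HasNonnegFactorization M (nnRank M) :=
  Nat.sInf_mem (s := {r | HasNonnegFactorization M r})
    ⟨n, M, 1, hM, fun k j => by by_cases h : k = j <;> simp [Matrix.one_apply, h], by simp⟩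

theorem exists_nonneg_factorization_mem_Icc {ι κ ι' : Type*} [Fintype ι] [Fintype κ]
    {U : Matrix ι κ ℝ} {V : Matrix κ ι' ℝ} (hU : ∀ i k, 0 ≤ U i k) (hV : ∀ k j, 0 ≤ V k j)
    {C : ℝ} (hC : ∀ i j, (U * V) i j ≤ C) :
    ∃ (U' : Matrix ι κ ℝ) (V' : Matrix κ ι' ℝ), (∀ i k, U' i k ∈ Icc 0 1) ∧
      (∀ k j, V' k j ∈ Icc 0 (Fintype.card ι * C)) ∧ U' * V' = U * V := by
  set a : κ → ℝ := fun k => ∑ i, U i k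
  have hUa : ∀ i k, U i k ≤ a k := fun i k =>
    Finset.single_le_sum (f := fun i => U i k) (fun i _ => hU i k) (Finset.mem_univ i)
  have ha : ∀ k, 0 ≤ a k := fun k => Finset.sum_nonneg fun i _ => hU i k
  refine ⟨fun i k => U i k / a k, fun k j => a k * V k j, fun i k => ?_, fun k j => ?_, ?_⟩
  · exact ⟨div_nonneg (hU i k) (ha k), div_le_one_of_le₀ (hUa i k) (ha k)⟩
  · refine ⟨mul_nonneg (ha k) (hV k j), ?_⟩
    calc a k * V k j = ∑ i, U i k * V k j := Finset.sum_mul ..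
      _ ≤ ∑ i, (U * V) i j := Finset.sum_le_sum fun i _ =>
          Finset.single_le_sum (f := fun k => U i k * V k j)
            (fun k _ => mul_nonneg (hU i k) (hV k j)) (Finset.mem_univ k)
      _ ≤ ∑ _i : ι, C := Finset.sum_le_sum fun i _ => hC i j
      _ = Fintype.card ι * C := by simp
  · ext i j
    refine Finset.sum_congr rfl fun k _ => ?_
    -- a zero column sum forces the column to vanish, which makes the junk `U i k / 0 = 0` harmless
    by_cases hak : a k = 0
    · have : U i k = 0 := le_antisymm (hak ▸ hUa i k) (hU i k)
      simp [this]
    · field_simp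

theorem isClosed_setOf_hasNonnegFactorization (m n r : ℕ) :
    IsClosed {M : Matrix (Fin m) (Fin n) ℝ | HasNonnegFactorization M r} := by
  refine isClosed_of_closure_subset fun M hM => ?_
  obtain ⟨C, hC⟩ : ∃ C, ∀ i j, M i j < C := by
    obtain ⟨C, hC⟩ := (Set.finite_range fun p : Fin m × Fin n => M p.1 p.2).bddAbove
    exact ⟨C + 1, fun i j => (hC ⟨(i, j), rfl⟩).trans_lt (lt_add_one C)⟩
  set B : Set (Matrix (Fin m) (Fin n) ℝ) := univ.pi fun _ => univ.pi fun _ => Iio C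
  have hB : IsOpen B := isOpen_set_pi finite_univ fun _ _ =>
    isOpen_set_pi finite_univ fun _ _ => isOpen_Iio
  set K : Set (Matrix (Fin m) (Fin r) ℝ × Matrix (Fin r) (Fin n) ℝ) :=
    (univ.pi fun _ => univ.pi fun _ => Icc 0 1) ×ˢ (univ.pi fun _ => univ.pi fun _ => Icc 0 (m * C))
  have hK : IsCompact K :=
    (isCompact_univ_pi fun _ => isCompact_univ_pi fun _ => isCompact_Icc).prod
      (isCompact_univ_pi fun _ => isCompact_univ_pi fun _ => isCompact_Icc)
  have hBK : B ∩ {M | HasNonnegFactorization M r} ⊆ (fun p => p.1 * p.2) '' K := by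
    rintro _ ⟨hMB, U, V, hU, hV, rfl⟩
    obtain ⟨U', V', hU', hV', hUV⟩ := exists_nonneg_factorization_mem_Icc hU hV
      fun i j => (hMB i (mem_univ i) j (mem_univ j)).le
    refine ⟨(U', V'), ⟨fun i _ k _ => hU' i k, fun k _ j _ => ?_⟩, hUV⟩
    simpa using hV' k j
  obtain ⟨⟨U, V⟩, ⟨hU, hV⟩, rfl⟩ := closure_minimal hBK
    ((hK.image (continuous_fst.matrix_mul continuous_snd)).isClosed)
    (hB.inter_closure ⟨fun i _ j _ => hC i j, hM⟩)
  exact ⟨U, V, fun i k => (hU i (mem_univ i) k (mem_univ k)).1,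
    fun k j => (hV k (mem_univ k) j (mem_univ j)).1, rfl⟩

theorem isClosed_setOf_nonneg_nnRank_le (m n t : ℕ) :
    IsClosed {M : Matrix (Fin m) (Fin n) ℝ | (∀ i j, 0 ≤ M i j) ∧ nnRank M ≤ t} := by
  have : {M : Matrix (Fin m) (Fin n) ℝ | (∀ i j, 0 ≤ M i j) ∧ nnRank M ≤ t} =
      ⋃ s ∈ Iic t, {M | HasNonnegFactorization M s} := by
    ext M
    simp only [mem_ofPred_eq, mem_iUnion, mem_Iic, exists_prop]
    constructor
    · exact fun ⟨hM, hMt⟩ => ⟨nnRank M, hMt, hasNonnegFactorization_nnRank hM⟩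
    · exact fun ⟨s, hst, hs⟩ => ⟨hs.nonneg, (nnRank_le_of_hasNonnegFactorization hs).trans hst⟩
  rw [this]
  exact (finite_Iic t).isClosed_biUnion fun s _ => isClosed_setOf_hasNonnegFactorization m n s

theorem nnRank_lower_semicontinuous_general {m n : ℕ}
    (P : Matrix (Fin m) (Fin n) ℝ) {r : ℕ} (hr : nnRank P = r) :
    ∃ ε > 0, ∀ N : Matrix (Fin m) (Fin n) ℝ,
      (∀ i j, 0 ≤ N i j) → ‖N - P‖ < ε → r ≤ nnRank N := by
  rcases r with _ | t
  · exact ⟨1, one_pos, fun _ _ _ => Nat.zero_le _⟩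
  have hP : P ∉ {M : Matrix (Fin m) (Fin n) ℝ | (∀ i j, 0 ≤ M i j) ∧ nnRank M ≤ t} :=
    fun h => by have := h.2; omega
  obtain ⟨ε, hε, hball⟩ :=
    Metric.isOpen_iff.mp (isClosed_setOf_nonneg_nnRank_le m n t).isOpen_compl P hP
  refine ⟨ε, hε, fun N hN hNP => not_lt.mp fun hlt => hball ?_ ⟨hN, Nat.lt_succ_iff.mp hlt⟩⟩
  rwa [Metric.mem_ball, dist_eq_norm]

/-- The nonnegative rank is lower semicontinuous at nonnegative matrices without
zero columns: it can only increase in a small enough neighborhood. -/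
theorem nnRank_lower_semicontinuous {m n : ℕ}
    (P : Matrix (Fin m) (Fin n) ℝ) (hP : ∀ i j, 0 ≤ P i j)
    (hcol : ∀ j, ∃ i, P i j ≠ 0) {r : ℕ} (hr : nnRank P = r) :
    ∃ ε > 0, ∀ N : Matrix (Fin m) (Fin n) ℝ,
      (∀ i j, 0 ≤ N i j) → ‖N - P‖ < ε → r ≤ nnRank N :=
  nnRank_lower_semicontinuous_general P hr
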